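/- Fix p ≥ 2 and 0 ≤ i ≤ (p−1)/2. If u : M^{1+n} → ℂ satisfies Σ'_μ ∂_μ^{p−i}(u^k) ∂_μ^i(ū^l) = 0 for all 1 ≤ k ≤ p−i and 0 ≤ l ≤ i, then for any holomorphic f, v = f(u) satisfies the same system of equations. That is, all solutions of the (p,i)-submodel are functionally invariant. -/

import Mathlib

/-- The partial derivative `∂_μ` of a function on `(1+n)`-dimensional
Minkowski space `M^{1+n} = Fin (n+1) → ℝ` (coordinate `0` is time). -/
noncomputable def pd {n : ℕ} {E : Type*} [NormedAddCommGroup E] [NormedSpace ℝ E]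
    (μ : Fin (n + 1)) (f : (Fin (n + 1) → ℝ) → E) (x : Fin (n + 1) → ℝ) : E :=
  deriv (fun t : ℝ => f (x + t • (Pi.single μ 1 : Fin (n + 1) → ℝ))) 0

/-- The Minkowski signed sum `Σ'_μ A_μ = A_0 − Σ_{i=1}^n A_i`, implementing
index contraction with the metric `diag(1,−1,…,−1)`. -/
def msum {n : ℕ} {E : Type*} [AddCommGroup E] (A : Fin (n + 1) → E) : E :=
  A 0 - ∑ i ∈ Finset.univ.erase (0 : Fin (n + 1)), A i

/-!
Along the line `t ↦ x + t e_μ` the operator `∂_μ^m` is the `m`-th derivative of a function of one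
real variable, and by Faà di Bruno the `m`-th derivative of `g ∘ c` depends on `g` only through its
`m`-jet at `c t`. Replacing `g` by its Taylor polynomial `P` of degree `m` at `u x` gives
`∂_μ^m (g ∘ u) = Σ_j P_j ∂_μ^m (u^j)` at `x`, with coefficients independent of `μ`: this is the
anti-homomorphism property of the Bell matrix. Applied to `f^k` and to the conjugate of `f^l`, both
factors of the `(p,i)`-equations for `f ∘ u` become combinations of the factors for `u`, and
`Σ'_μ` is bilinear; the extra term `j = 0` vanishes since `p - i ≥ 1`.
-/

open Polynomial Finset
open scoped ContDiff Nat

namespace Polynomial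

theorem iteratedDeriv_eval {𝕜 : Type*} [NontriviallyNormedField 𝕜] (P : 𝕜[X]) (k : ℕ) :
    iteratedDeriv k (fun z => P.eval z) = fun z => (derivative^[k] P).eval z := by
  induction k generalizing P with
  | zero => simp
  | succ k ih =>
    have hP : deriv (fun z => P.eval z) = fun z => P.derivative.eval z := by
      funext z; exact P.deriv
    rw [iteratedDeriv_succ', hP, ih, Function.iterate_succ_apply]

theorem eval_iterate_derivative_eq_factorial_mul_coeff_taylor {R : Type*} [CommSemiring R]
    (P : R[X]) (r : R) (k : ℕ) :
    (derivative^[k] P).eval r = k ! * (taylor r P).coeff k := by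
  rw [taylor_coeff, ← factorial_smul_hasseDeriv]
  simp [nsmul_eq_mul]

end Polynomial

section Jet

variable {𝕜 𝕜' : Type*} [NontriviallyNormedField 𝕜] [NontriviallyNormedField 𝕜']

/-- The Taylor polynomial `Σ_{j ≤ m} g⁽ʲ⁾(z₀) / j! • (X - z₀)ʲ`. -/
noncomputable def jetPolynomial (g : 𝕜' → 𝕜') (z₀ : 𝕜') (m : ℕ) : 𝕜'[X] :=
  taylor (-z₀) (∑ j ∈ range (m + 1), C (iteratedDeriv j g z₀ / j !) * X ^ j)

theorem natDegree_jetPolynomial_le (g : 𝕜' → 𝕜') (z₀ : 𝕜') (m : ℕ) :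
    (jetPolynomial g z₀ m).natDegree ≤ m := by
  rw [jetPolynomial, natDegree_taylor]
  refine natDegree_sum_le_of_forall_le _ _ fun j hj => ?_
  exact (natDegree_C_mul_X_pow_le _ _).trans (Nat.lt_succ_iff.mp (mem_range.mp hj))

theorem iteratedDeriv_eval_jetPolynomial [CharZero 𝕜'] (g : 𝕜' → 𝕜') (z₀ : 𝕜') {k m : ℕ}
    (hk : k ≤ m) :
    iteratedDeriv k (fun z => (jetPolynomial g z₀ m).eval z) z₀ = iteratedDeriv k g z₀ := by
  rw [iteratedDeriv_eval]
  dsimp only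
  rw [eval_iterate_derivative_eq_factorial_mul_coeff_taylor, jetPolynomial,
    taylor_taylor, add_neg_cancel, taylor_zero, finsetSum_coeff,
    sum_eq_single_of_mem k (mem_range.mpr (Nat.lt_succ_of_le hk))]
  · simp [mul_div_cancel₀ _ (Nat.cast_ne_zero.mpr (Nat.factorial_ne_zero k) : (k ! : 𝕜') ≠ 0)]
  · intro j _ hjk
    simp [hjk.symm]

variable [NormedAlgebra 𝕜 𝕜']

theorem iteratedFDeriv_eq_of_iteratedDeriv_eq {g₁ g₂ : 𝕜' → 𝕜'} {z : 𝕜'} {k : ℕ}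
    (hg₁ : ContDiffAt 𝕜' k g₁ z) (hg₂ : ContDiffAt 𝕜' k g₂ z)
    (h : iteratedDeriv k g₁ z = iteratedDeriv k g₂ z) :
    iteratedFDeriv 𝕜 k g₁ z = iteratedFDeriv 𝕜 k g₂ z := by
  rw [← hg₁.restrictScalars_iteratedFDeriv (𝕜 := 𝕜), ← hg₂.restrictScalars_iteratedFDeriv (𝕜 := 𝕜)]
  simp [iteratedFDeriv_eq_equiv_comp, h]

theorem iteratedDeriv_comp_congr {g₁ g₂ : 𝕜' → 𝕜'} {c : 𝕜 → 𝕜'} {t : 𝕜} {m : ℕ}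
    (hg₁ : ContDiffAt 𝕜' m g₁ (c t)) (hg₂ : ContDiffAt 𝕜' m g₂ (c t)) (hc : ContDiffAt 𝕜 m c t)
    (h : ∀ k ≤ m, iteratedDeriv k g₁ (c t) = iteratedDeriv k g₂ (c t)) :
    iteratedDeriv m (fun s => g₁ (c s)) t = iteratedDeriv m (fun s => g₂ (c s)) t := by
  simp only [← Function.comp_def g₁, ← Function.comp_def g₂,
    iteratedDeriv_vcomp_eq_sum_orderedFinpartition (hg₁.restrict_scalars 𝕜) hc le_rfl,
    iteratedDeriv_vcomp_eq_sum_orderedFinpartition (hg₂.restrict_scalars 𝕜) hc le_rfl]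
  refine sum_congr rfl fun p _ => ?_
  have hp := p.length_le
  rw [iteratedFDeriv_eq_of_iteratedDeriv_eq (hg₁.of_le (by exact_mod_cast hp))
    (hg₂.of_le (by exact_mod_cast hp)) (h _ hp)]

theorem iteratedDeriv_comp_eq_sum_coeff_jetPolynomial_mul [CharZero 𝕜'] {g : 𝕜' → 𝕜'}
    {c : 𝕜 → 𝕜'} {t : 𝕜} {m : ℕ} (hg : ContDiffAt 𝕜' m g (c t)) (hc : ContDiffAt 𝕜 m c t) :
    iteratedDeriv m (fun s => g (c s)) t = ∑ j ∈ range (m + 1),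
      (jetPolynomial g (c t) m).coeff j * iteratedDeriv m (fun s => c s ^ j) t := by
  have hP : ContDiffAt 𝕜' m (fun z => (jetPolynomial g (c t) m).eval z) (c t) := by
    simpa using ((jetPolynomial g (c t) m).contDiff_aeval (𝕜 := 𝕜') m).contDiffAt
  rw [iteratedDeriv_comp_congr hg hP hc
    fun k hk => (iteratedDeriv_eval_jetPolynomial g (c t) hk).symm]
  simp_rw [eval_eq_sum_range' (Nat.lt_succ_of_le (natDegree_jetPolynomial_le g (c t) m))]
  rw [iteratedDeriv_fun_sum fun j _ => contDiffAt_const.mul (hc.pow j)]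
  exact sum_congr rfl fun j _ => iteratedDeriv_const_mul _ (hc.pow j)

end Jet

theorem iteratedDeriv_star (m : ℕ) (c : ℝ → ℂ) :
    iteratedDeriv m (fun s => star (c s)) = fun s => star (iteratedDeriv m c s) := by
  induction m with
  | zero => simp
  | succ m ih => rw [iteratedDeriv_succ, ih, deriv.star', iteratedDeriv_succ]

section Minkowski

variable {n : ℕ} {E : Type*} [NormedAddCommGroup E] [NormedSpace ℝ E]

theorem pd_comp_line (μ : Fin (n + 1)) (h : (Fin (n + 1) → ℝ) → E) (x : Fin (n + 1) → ℝ) :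
    (fun t : ℝ => pd μ h (x + t • Pi.single μ 1))
      = deriv fun t : ℝ => h (x + t • Pi.single μ 1) := by
  funext t
  have hshift : (fun s : ℝ => h (x + t • Pi.single μ 1 + s • Pi.single μ 1))
      = fun s => h (x + (t + s) • Pi.single μ 1) := by
    simp only [add_smul, add_assoc]
  rw [pd, hshift]
  exact (deriv_comp_const_add (fun r : ℝ => h (x + r • Pi.single μ 1)) t 0).trans (by rw [add_zero])

theorem pd_iterate_comp_line (μ : Fin (n + 1)) (m : ℕ) (h : (Fin (n + 1) → ℝ) → E)
    (x : Fin (n + 1) → ℝ) :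
    (fun t : ℝ => (pd μ)^[m] h (x + t • Pi.single μ 1))
      = iteratedDeriv m fun t : ℝ => h (x + t • Pi.single μ 1) := by
  induction m generalizing h with
  | zero => simp
  | succ m ih => rw [Function.iterate_succ_apply, ih, pd_comp_line, iteratedDeriv_succ']

theorem pd_iterate_eq_iteratedDeriv (μ : Fin (n + 1)) (m : ℕ) (h : (Fin (n + 1) → ℝ) → E)
    (x : Fin (n + 1) → ℝ) :
    (pd μ)^[m] h x = iteratedDeriv m (fun t : ℝ => h (x + t • Pi.single μ 1)) 0 := by
  simpa using congrFun (pd_iterate_comp_line μ m h x) 0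

theorem pd_iterate_const (μ : Fin (n + 1)) {m : ℕ} (hm : m ≠ 0) (c : E) (x : Fin (n + 1) → ℝ) :
    (pd μ)^[m] (fun _ => c) x = 0 := by
  simp [pd_iterate_eq_iteratedDeriv, iteratedDeriv_const, hm]

theorem pd_iterate_star (μ : Fin (n + 1)) (m : ℕ) (h : (Fin (n + 1) → ℝ) → ℂ)
    (x : Fin (n + 1) → ℝ) :
    (pd μ)^[m] (fun y => star (h y)) x = star ((pd μ)^[m] h x) := by
  simp only [pd_iterate_eq_iteratedDeriv, iteratedDeriv_star]

theorem pd_iterate_comp_eq_sum {g : ℂ → ℂ} {u : (Fin (n + 1) → ℝ) → ℂ} {m : ℕ}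
    (hg : ContDiff ℂ m g) (hu : ContDiff ℝ m u) (μ : Fin (n + 1)) (x : Fin (n + 1) → ℝ) :
    (pd μ)^[m] (fun y => g (u y)) x = ∑ j ∈ range (m + 1),
      (jetPolynomial g (u x) m).coeff j * (pd μ)^[m] (fun y => u y ^ j) x := by
  have hline : ContDiff ℝ m fun t : ℝ => u (x + t • Pi.single μ 1) :=
    hu.comp (contDiff_const.add (contDiff_id.smul contDiff_const))
  simpa [pd_iterate_eq_iteratedDeriv] using
    iteratedDeriv_comp_eq_sum_coeff_jetPolynomial_mul hg.contDiffAt (hline.contDiffAt (x := 0))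

theorem pd_iterate_star_comp_eq_sum {g : ℂ → ℂ} {u : (Fin (n + 1) → ℝ) → ℂ} {m : ℕ}
    (hg : ContDiff ℂ m g) (hu : ContDiff ℝ m u) (μ : Fin (n + 1)) (x : Fin (n + 1) → ℝ) :
    (pd μ)^[m] (fun y => star (g (u y))) x = ∑ j ∈ range (m + 1),
      star ((jetPolynomial g (u x) m).coeff j) * (pd μ)^[m] (fun y => star (u y) ^ j) x := by
  simp only [← star_pow, pd_iterate_star, pd_iterate_comp_eq_sum hg hu, star_sum, star_mul']

theorem msum_sum {M ι : Type*} [AddCommGroup M] (s : Finset ι) (F : ι → Fin (n + 1) → M) :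
    msum (fun μ => ∑ j ∈ s, F j μ) = ∑ j ∈ s, msum (F j) := by
  simp only [msum, sum_sub_distrib]
  rw [sum_comm]

theorem msum_mul_left {R : Type*} [Ring R] (c : R) (A : Fin (n + 1) → R) :
    msum (fun μ => c * A μ) = c * msum A := by
  simp only [msum, mul_sub, mul_sum]

theorem msum_mul_eq_zero_of_eq_sum {R ι κ : Type*} [CommRing R] {A B : Fin (n + 1) → R}
    {s : Finset ι} {t : Finset κ} {a : ι → R} {b : κ → R}
    {A' : ι → Fin (n + 1) → R} {B' : κ → Fin (n + 1) → R}
    (hA : ∀ μ, A μ = ∑ j ∈ s, a j * A' j μ) (hB : ∀ μ, B μ = ∑ k ∈ t, b k * B' k μ)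
    (h : ∀ j ∈ s, ∀ k ∈ t, msum (fun μ => A' j μ * B' k μ) = 0) :
    msum (fun μ => A μ * B μ) = 0 := by
  calc msum (fun μ => A μ * B μ)
      = ∑ j ∈ s, ∑ k ∈ t, a j * b k * msum (fun μ => A' j μ * B' k μ) := by
        simp only [hA, hB, sum_mul_sum, msum_sum, ← msum_mul_left, mul_mul_mul_comm]
    _ = 0 := sum_eq_zero fun j hj => sum_eq_zero fun k hk => by rw [h j hj k hk, mul_zero]

end Minkowski

theorem pi_submodel_functional_invariance_general {n : ℕ} (p i : ℕ)
    (hi : 2 * i + 1 ≤ p)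
    (u : (Fin (n + 1) → ℝ) → ℂ) (hu : ContDiff ℝ (⊤ : ℕ∞) u)
    (hsub : ∀ k ∈ Finset.Icc 1 (p - i), ∀ l ∈ Finset.Icc 0 i, ∀ x,
      msum (fun μ => (pd μ)^[p - i] (fun y => u y ^ k) x *
        (pd μ)^[i] (fun y => star (u y) ^ l) x) = 0)
    (f : ℂ → ℂ) (hf : Differentiable ℂ f) :
    ∀ k ∈ Finset.Icc 1 (p - i), ∀ l ∈ Finset.Icc 0 i, ∀ x,
      msum (fun μ => (pd μ)^[p - i] (fun y => f (u y) ^ k) x *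
        (pd μ)^[i] (fun y => star (f (u y)) ^ l) x) = 0 := by
  intro k _ l _ x
  simp only [← star_pow]
  refine msum_mul_eq_zero_of_eq_sum
    (fun μ => pd_iterate_comp_eq_sum (hf.pow k).contDiff (contDiff_infty.mp hu _) μ x)
    (fun μ => pd_iterate_star_comp_eq_sum (hf.pow l).contDiff (contDiff_infty.mp hu _) μ x) ?_
  rintro (_ | j) hj m hm
  · simp [pd_iterate_const _ (show p - i ≠ 0 by omega), msum]
  · exact hsub (j + 1) (mem_Icc.mpr ⟨le_add_self, by simpa using hj⟩) m (by simpa using hm) x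

/-- Functional invariance of the `(p,i)`-submodel: if `u` satisfies
`Σ'_μ ∂_μ^{p−i}(u^k) ∂_μ^i(ū^l) = 0` for all `1 ≤ k ≤ p−i` and `0 ≤ l ≤ i`,
then for any holomorphic `f`, `v = f(u)` satisfies the same system. -/
theorem pi_submodel_functional_invariance {n : ℕ} (p i : ℕ)
    (hp : 2 ≤ p) (hi : 2 * i + 1 ≤ p)
    (u : (Fin (n + 1) → ℝ) → ℂ) (hu : ContDiff ℝ (⊤ : ℕ∞) u)
    (hsub : ∀ k ∈ Finset.Icc 1 (p - i), ∀ l ∈ Finset.Icc 0 i, ∀ x,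
      msum (fun μ => (pd μ)^[p - i] (fun y => u y ^ k) x *
        (pd μ)^[i] (fun y => star (u y) ^ l) x) = 0)
    (f : ℂ → ℂ) (hf : Differentiable ℂ f) :
    ∀ k ∈ Finset.Icc 1 (p - i), ∀ l ∈ Finset.Icc 0 i, ∀ x,
      msum (fun μ => (pd μ)^[p - i] (fun y => f (u y) ^ k) x *
        (pd μ)^[i] (fun y => star (f (u y)) ^ l) x) = 0 :=
  pi_submodel_functional_invariance_general p i hi u hu hsub f hf
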